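/- arXiv:2206.12862 — 2 statements merged into one kernel-verified Lean document; each statement's English description precedes it below -/
import Mathlib

section
/- Let G be an unambiguous CFG (every string has at most one derivation tree from the start symbol) with algebraic representation ⟨[n], π, M, {β_σ}⟩, and let A' = ⟨[n'], π', {A'_σ}⟩ be an HMM. Define β_{G,A'}^{(L)} := Σ_{w ∈ Σ^L} β_G(w) ⊗ vec(A'_w). Then the HMM-probability of the length-L slice of L_G satisfies f_{A'}(L_G ∩ Σ^L) = (π ⊗ e ⊗ π')ᵀ · β_{G,A'}^{(L)}, where e is the all-ones vector in ℝ^{n'}. -/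
/-!
For an unambiguous grammar the number of derivation trees of `w` from the start symbol is the
membership indicator of `w`, provided that number is finite. Finiteness holds in Chomsky normal
form: a derivation of `w` is determined by its root step, i.e. a leaf or a splitting of `w` into
two nonempty factors together with derivations of these strictly shorter words. With the tree
counts replaced by indicators, the right-hand side is the bilinear form
`π'ᵀ (∑_w β_G(w)[start] • A'_w) e`, which splits as a sum over `w`.
-/

open Matrix

/-- A context-free grammar in Chomsky normal form. -/
structure CNF (N α : Type) where
  bin : N → N → N → Prop
  ter : N → α → Prop
  start : N

/-- Derivation trees of a CNF grammar rooted at a given nonterminal, yielding a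
given string. -/
inductive Deriv {N α : Type} (G : CNF N α) : N → List α → Type
  | leaf {i : N} {s : α} : G.ter i s → Deriv G i [s]
  | node {i j k : N} {w₁ w₂ : List α} :
      G.bin i j k → w₁ ≠ [] → w₂ ≠ [] →
      Deriv G j w₁ → Deriv G k w₂ → Deriv G i (w₁ ++ w₂)

def WordSplit {α : Type} (w : List α) : Type :=
  {p : List α × List α // p.1 ++ p.2 = w ∧ p.1 ≠ [] ∧ p.2 ≠ []}

namespace WordSplit

variable {α : Type} {w : List α}

theorem length_fst_lt (p : WordSplit w) : p.1.1.length < w.length := by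
  have := congrArg List.length p.2.1
  have := List.length_pos_iff.2 p.2.2.2
  simp only [List.length_append] at *
  omega

theorem length_snd_lt (p : WordSplit w) : p.1.2.length < w.length := by
  have := congrArg List.length p.2.1
  have := List.length_pos_iff.2 p.2.2.1
  simp only [List.length_append] at *
  omega

instance : Finite (WordSplit w) := by
  refine Finite.of_injective (fun p : WordSplit w => (⟨_, p.length_fst_lt⟩ : Fin w.length))
    fun p q h => Subtype.ext ?_
  obtain ⟨h₁, h₂⟩ := List.append_inj (p.2.1.trans q.2.1.symm) (Fin.mk.inj h)
  exact Prod.ext h₁ h₂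

end WordSplit

namespace Deriv

variable {N α : Type} {G : CNF N α}

abbrev RootStep (G : CNF N α) (w : List α) : Type :=
  {s : α // w = [s]} ⊕ Σ j k : N, Σ p : WordSplit w, Deriv G j p.1.1 × Deriv G k p.1.2

noncomputable def ofRootStep {i : N} {w : List α} : RootStep G w → Option (Deriv G i w)
  | .inl ⟨s, hs⟩ => by
      classical
      exact if ht : G.ter i s then some (hs ▸ leaf ht) else none
  | .inr ⟨j, k, ⟨(w₁, w₂), hw, h₁, h₂⟩, d₁, d₂⟩ => by
      classical
      exact if hb : G.bin i j k then some (hw ▸ node hb h₁ h₂ d₁ d₂) else none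

theorem exists_ofRootStep_eq {i : N} {w : List α} (d : Deriv G i w) :
    ∃ r : RootStep G w, ofRootStep r = some d := by
  cases d with
  | leaf ht => exact ⟨.inl ⟨_, rfl⟩, by simp [ofRootStep, ht]⟩
  | node hb h₁ h₂ d₁ d₂ =>
    exact ⟨.inr ⟨_, _, ⟨(_, _), rfl, h₁, h₂⟩, d₁, d₂⟩, by simp [ofRootStep, hb]⟩

instance finite [Finite N] (i : N) (w : List α) : Finite (Deriv G i w) := by
  have : Finite {s : α // w = [s]} :=
    Finite.of_injective (fun _ => ()) fun ⟨s, hs⟩ ⟨t, ht⟩ _ => by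
      cases hs.symm.trans ht; rfl
  have (j : N) (p : WordSplit w) : Finite (Deriv G j p.1.1) := finite j p.1.1
  have (k : N) (p : WordSplit w) : Finite (Deriv G k p.1.2) := finite k p.1.2
  choose r hr using exists_ofRootStep_eq (G := G) (i := i) (w := w)
  exact Finite.of_injective r fun d d' h => Option.some_injective _ (by rw [← hr, ← hr, h])
termination_by w.length
decreasing_by
  · exact p.length_fst_lt
  · exact p.length_snd_lt

end Deriv

theorem Nat.card_eq_ite_nonempty_of_card_le_one {X : Type*} [Finite X] [Decidable (Nonempty X)]
    (h : Nat.card X ≤ 1) :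
    Nat.card X = if Nonempty X then 1 else 0 := by
  split_ifs with hX
  · exact le_antisymm h Nat.card_pos
  · exact @Nat.card_of_isEmpty _ (not_nonempty_iff.1 hX)

theorem sum_indicator_kronecker_mul_eq_dotProduct_mulVec {ι κ R : Type*} [Fintype ι]
    [DecidableEq ι] [Fintype κ] [CommSemiring R] (i₀ : ι) (v : κ → R) (B : ι → Matrix κ κ R) :
    ∑ p : ι × (κ × κ), ((if p.1 = i₀ then (1 : R) else 0) * (v p.2.1 * 1)) * B p.1 p.2.1 p.2.2 =
      v ⬝ᵥ B i₀ *ᵥ fun _ => 1 := by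
  simp [Fintype.sum_prod_type, dotProduct, mulVec, Finset.mul_sum]

open scoped Classical in
theorem stmt6_general {n n' : ℕ} {α : Type} [Fintype α] (G : CNF (Fin n) α)
    (hU : ∀ w : List α, Nat.card (Deriv G G.start w) ≤ 1)
    (π' : Fin n' → ℝ) (A : α → Matrix (Fin n') (Fin n') ℝ)
    (L : ℕ) :
    (∑ w : Fin L → α,
        if Nonempty (Deriv G G.start (List.ofFn w)) then
          π' ⬝ᵥ ((List.ofFn w).map A).prod.mulVec (fun _ => (1 : ℝ))
        else 0) =
      ∑ p : Fin n × (Fin n' × Fin n'),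
        ((if p.1 = G.start then (1 : ℝ) else 0) * (π' p.2.1 * (1 : ℝ))) *
          (∑ w : Fin L → α,
            (Nat.card (Deriv G p.1 (List.ofFn w)) : ℝ) *
              ((List.ofFn w).map A).prod p.2.1 p.2.2) := by
  let β : Fin n → Matrix (Fin n') (Fin n') ℝ := fun i =>
    ∑ w : Fin L → α, (Nat.card (Deriv G i (List.ofFn w)) : ℝ) • ((List.ofFn w).map A).prod
  have hβ : ∀ i a b, ∑ w : Fin L → α,
      (Nat.card (Deriv G i (List.ofFn w)) : ℝ) * ((List.ofFn w).map A).prod a b = β i a b := by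
    simp [β, Matrix.sum_apply]
  simp only [hβ]
  rw [sum_indicator_kronecker_mul_eq_dotProduct_mulVec]
  simp only [β, sum_mulVec, dotProduct_sum, smul_mulVec, dotProduct_smul]
  refine Finset.sum_congr rfl fun w _ => ?_
  rw [Nat.card_eq_ite_nonempty_of_card_le_one (hU _)]
  split_ifs <;> simp

open scoped Classical in
/-- For an unambiguous CFG `G` and an HMM `A'`:
`f_{A'}(L_G ∩ Σ^L) = (π ⊗ e ⊗ π')ᵀ · β_{G,A'}^{(L)}`, where
`β_{G,A'}^{(L)} = Σ_{w ∈ Σ^L} β_G(w) ⊗ vec(A'_w)`, `π` is the indicator vector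
of the start symbol, and `e` the all-ones vector in `ℝ^{n'}`. -/
theorem stmt6 {n n' : ℕ} {α : Type} [Fintype α] (G : CNF (Fin n) α)
    (hU : ∀ w : List α, Nat.card (Deriv G G.start w) ≤ 1)
    (π' : Fin n' → ℝ) (A : α → Matrix (Fin n') (Fin n') ℝ)
    (hπ0 : ∀ i, 0 ≤ π' i) (hπ1 : ∑ i, π' i = 1)
    (hA0 : ∀ s i j, 0 ≤ A s i j)
    (hstoch : ∀ i, ∑ s : α, ∑ j, A s i j = 1)
    (L : ℕ) :
    (∑ w : Fin L → α,
        if Nonempty (Deriv G G.start (List.ofFn w)) then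
          π' ⬝ᵥ ((List.ofFn w).map A).prod.mulVec (fun _ => (1 : ℝ))
        else 0) =
      ∑ p : Fin n × (Fin n' × Fin n'),
        ((if p.1 = G.start then (1 : ℝ) else 0) * (π' p.2.1 * (1 : ℝ))) *
          (∑ w : Fin L → α,
            (Nat.card (Deriv G p.1 (List.ofFn w)) : ℝ) *
              ((List.ofFn w).map A).prod p.2.1 p.2.2) :=
  stmt6_general G hU π' A L
end

section
/- Let {(uᵢ, vᵢ)}_{i∈[N]} be pairs of strings over Σ and build, over the extended alphabet Σₑ = Σ ∪ {1,…,N} ∪ {#, &}, the languages L₁ = { i₁…i_k & j_l…j₁ # v_{j₁}…v_{j_l} & u_{i_k}^R…u_{i₁}^R : k,l ≥ 1, iₐ, jₐ ∈ [N] } and L₂ = { w & w^R # w' & w'^R : w, w' ∈ Σₑ'* } (for appropriate subalphabets). Then a word x lies in L₁ ∩ L₂ if and only if x = i₁…i_k & i_k…i₁ # v_{i₁}…v_{i_k} & u_{i_k}^R…u_{i₁}^R for some sequence i₁,…,i_k with u_{i₁}…u_{i_k} = v_{i₁}…v_{i_k}; moreover |x| = 2(k + |u_{i₁}…u_{i_k}|)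 + 3. Hence for any M > 0, L₁ ∩ L₂ contains a word of length at most 2M + 3 iff there is a PCP solution i₁,…,i_k with k + |u_{i₁}…u_{i_k}| ≤ M. -/
/-- The extended alphabet `Σₑ = Σ ∪ {1,…,N} ∪ {#, &}`. -/
abbrev ExtAlpha (α : Type) (N : ℕ) : Type := α ⊕ (Fin N ⊕ Bool)

/-- Embedding of an original-alphabet symbol. -/
def lit {α : Type} {N : ℕ} (s : α) : ExtAlpha α N := Sum.inl s

/-- Embedding of an index symbol `i ∈ [N]`. -/
def idx {α : Type} {N : ℕ} (i : Fin N) : ExtAlpha α N := Sum.inr (Sum.inl i)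

/-- The separator `#`. -/
def hashS {α : Type} {N : ℕ} : ExtAlpha α N := Sum.inr (Sum.inr true)

/-- The separator `&`. -/
def ampS {α : Type} {N : ℕ} : ExtAlpha α N := Sum.inr (Sum.inr false)

/-- Embedding of an original-alphabet string. -/
def emb {α : Type} {N : ℕ} (w : List α) : List (ExtAlpha α N) := w.map lit

/-- `L₁ = { i₁…i_k & j_l…j₁ # v_{j₁}…v_{j_l} & u_{i_k}^R…u_{i₁}^R : k, l ≥ 1 }`. -/
def PCPL1 {α : Type} {N : ℕ} (u v : Fin N → List α) : Set (List (ExtAlpha α N)) :=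
  {x | ∃ is js : List (Fin N), is ≠ [] ∧ js ≠ [] ∧
    x = (is.map idx) ++ [ampS] ++ (js.map idx).reverse ++ [hashS] ++
          emb ((js.map v).flatten) ++ [ampS] ++ (emb ((is.map u).flatten)).reverse}

/-- `L₂ = { w & w^R # w' & w'^R }` with `w` over the index subalphabet and `w'`
over the original subalphabet. -/
def PCPL2 (α : Type) (N : ℕ) : Set (List (ExtAlpha α N)) :=
  {x | ∃ (w : List (Fin N)) (w' : List α),
    x = (w.map idx) ++ [ampS] ++ (w.map idx).reverse ++ [hashS] ++
          emb w' ++ [ampS] ++ (emb w').reverse}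

/-! Index and letter symbols are distinct from the separators, so a word of the shape
`a & b^R # c & d^R` determines its four blocks. A word of `L₁` that also has the shape of `L₂`
therefore has `j = i` and `v_{i₁}…v_{i_k} = u_{i₁}…u_{i_k}`, and its length is read off the blocks. -/

variable {α : Type} {N : ℕ}

def pcpFrame (a b : List (Fin N)) (c d : List α) : List (ExtAlpha α N) :=
  a.map idx ++ [ampS] ++ (b.map idx).reverse ++ [hashS] ++ emb c ++ [ampS] ++ (emb d).reverse

lemma idx_injective : Function.Injective (idx : Fin N → ExtAlpha α N) := by
  intro i j h; simpa [idx] using h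

lemma emb_injective : Function.Injective (emb : List α → List (ExtAlpha α N)) :=
  Function.Injective.list_map fun s t h => by simpa [lit] using h

lemma pcpFrame_eq_append_hashS (a b : List (Fin N)) (c d : List α) :
    pcpFrame a b c d =
      (a.map idx ++ ampS :: (b.map idx).reverse) ++ hashS :: (emb c ++ ampS :: (emb d).reverse) := by
  simp [pcpFrame]

lemma pcpFrame_inj {a b a' b' : List (Fin N)} {c d c' d' : List α} :
    pcpFrame a b c d = pcpFrame a' b' c' d' ↔ a = a' ∧ b = b' ∧ c = c' ∧ d = d' := by
  simp only [pcpFrame_eq_append_hashS]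
  rw [List.append_cons_inj_of_notMem (by simp [idx, ampS, hashS]) (by simp [emb, lit, ampS, hashS]),
    List.append_cons_inj_of_notMem (by simp [idx, ampS]) (by simp [idx, ampS]),
    List.append_cons_inj_of_notMem (by simp [emb, lit, ampS]) (by simp [emb, lit, ampS]),
    List.reverse_inj, List.reverse_inj, idx_injective.list_map.eq_iff,
    idx_injective.list_map.eq_iff, emb_injective.eq_iff,
    emb_injective.eq_iff]
  simp only [true_and, and_assoc]

lemma length_pcpFrame (a b : List (Fin N)) (c d : List α) :
    (pcpFrame a b c d).length = a.length + b.length + c.length + d.length + 3 := by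
  simp [pcpFrame, emb]
  omega

lemma mem_PCPL1_inter_PCPL2 {u v : Fin N → List α} {x : List (ExtAlpha α N)} :
    x ∈ PCPL1 u v ∩ PCPL2 α N ↔ ∃ ks : List (Fin N), ks ≠ [] ∧
      (ks.map u).flatten = (ks.map v).flatten ∧
      x = pcpFrame ks ks (ks.map v).flatten (ks.map u).flatten := by
  constructor
  · rintro ⟨⟨ks, js, hks, -, rfl⟩, w, w', hw⟩
    obtain ⟨rfl, rfl, hv, hu⟩ := pcpFrame_inj.1 hw
    exact ⟨_, hks, hu.trans hv.symm, rfl⟩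
  · rintro ⟨ks, hks, huv, rfl⟩
    exact ⟨⟨ks, ks, hks, hks, rfl⟩, ks, (ks.map v).flatten, by rw [← huv]; rfl⟩

lemma length_pcpFrame_solution {u v : Fin N → List α} {ks : List (Fin N)}
    (huv : (ks.map u).flatten = (ks.map v).flatten) :
    (pcpFrame ks ks (ks.map v).flatten (ks.map u).flatten).length =
      2 * (ks.length + (ks.map u).flatten.length) + 3 := by
  rw [length_pcpFrame, ← huv]
  ring

/-- A word lies in `L₁ ∩ L₂` iff it encodes a Post correspondence
`u_{i₁}…u_{i_k} = v_{i₁}…v_{i_k}`, in which case its length is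
`2(k + |u_{i₁}…u_{i_k}|) + 3`; hence `L₁ ∩ L₂` contains a word of length at most
`2M + 3` iff there is a PCP solution with `k + |u_{i₁}…u_{i_k}| ≤ M`. -/
theorem stmt17 {α : Type} {N : ℕ} (u v : Fin N → List α) :
    (∀ x : List (ExtAlpha α N),
      x ∈ PCPL1 u v ∩ PCPL2 α N ↔
        ∃ is : List (Fin N), is ≠ [] ∧
          (is.map u).flatten = (is.map v).flatten ∧
          x = (is.map idx) ++ [ampS] ++ (is.map idx).reverse ++ [hashS] ++
                emb ((is.map v).flatten) ++ [ampS] ++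
                (emb ((is.map u).flatten)).reverse ∧
          x.length = 2 * (is.length + ((is.map u).flatten).length) + 3) ∧
    (∀ M : ℕ, 0 < M →
      ((∃ x ∈ PCPL1 u v ∩ PCPL2 α N, x.length ≤ 2 * M + 3) ↔
        ∃ is : List (Fin N), is ≠ [] ∧
          (is.map u).flatten = (is.map v).flatten ∧
          is.length + ((is.map u).flatten).length ≤ M)) := by
  refine ⟨fun x => ?_, fun M _ => ⟨?_, ?_⟩⟩
  · rw [mem_PCPL1_inter_PCPL2]
    refine exists_congr fun ks => and_congr_right fun _ => ⟨?_, ?_⟩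
    · rintro ⟨huv, rfl⟩
      exact ⟨huv, rfl, length_pcpFrame_solution huv⟩
    · rintro ⟨huv, rfl, -⟩
      exact ⟨huv, rfl⟩
  · rintro ⟨x, hx, hxM⟩
    obtain ⟨ks, hks, huv, rfl⟩ := mem_PCPL1_inter_PCPL2.1 hx
    rw [length_pcpFrame_solution huv] at hxM
    exact ⟨ks, hks, huv, by omega⟩
  · rintro ⟨ks, hks, huv, hM⟩
    refine ⟨_, mem_PCPL1_inter_PCPL2.2 ⟨ks, hks, huv, rfl⟩, ?_⟩
    rw [length_pcpFrame_solution huv]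
    omega
end
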